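/- arXiv:2207.05831 — 2 statements merged into one kernel-verified Lean document; each statement's English description precedes it below -/
import Mathlib

section
/- As formal power series in q, q · T₁'(q)/T₁(q) = ∑_{n≥1} σ₁(n) qⁿ, where T₁(q) = ∏_{i≥1} 1/(1 - q^{2i-1}); equivalently, q · T₁'(q) = T₁(q) · ∑_{n≥1} σ₁(n) qⁿ. -/
/-!
The partial products `P_N = ∏_{i<N} (1 - q^(2i+1))⁻¹` converge to `T₁` coefficientwise. The Euler
operator `θ = q d/dq` is a derivation, so `θ P_N = P_N * ∑_{i<N} (2i+1) q^(2i+1) / (1 - q^(2i+1))`.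
Since `θ` and multiplication are continuous for the coefficientwise topology, letting `N → ∞` gives
`θ T₁ = T₁ * ∑_i (2i+1) q^(2i+1) / (1 - q^(2i+1))`, and expanding the geometric series
`q^a / (1 - q^a) = ∑_{a ∣ n, n > 0} q^n` shows that the coefficient of `qⁿ` in that sum is `σ₁(n)`.
-/

open PowerSeries

/-- Sum of the odd divisors of `n`. -/
def sigmaO (n : ℕ) : ℕ := ∑ d ∈ n.divisors.filter (fun d => Odd d), d

/-- The coefficientwise (product) topology on `ℚ⟦X⟧`. -/
noncomputable instance : TopologicalSpace (PowerSeries ℚ) :=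
  (inferInstance : TopologicalSpace ((Unit →₀ ℕ) → ℚ))

/-- `T₁(q) = ∏_{i ≥ 1} (1 - q^{2i-1})⁻¹`. -/
noncomputable def T1 : PowerSeries ℚ :=
  ∏' i : ℕ, (1 - (X : PowerSeries ℚ) ^ (2 * i + 1))⁻¹

open Filter Topology

section Derivation

variable {R A ι : Type*} [CommSemiring R] [CommSemiring A] [Algebra R A]

theorem Derivation.map_prod_of_forall_eq_mul (D : Derivation R A A) (s : Finset ι) {f h : ι → A}
    (hf : ∀ i ∈ s, D (f i) = f i * h i) :
    D (∏ i ∈ s, f i) = (∏ i ∈ s, f i) * ∑ i ∈ s, h i := by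
  classical
  induction s using Finset.induction with
  | empty => simp
  | insert a s ha ih =>
    rw [Finset.prod_insert ha, Finset.sum_insert ha, Derivation.leibniz, smul_eq_mul, smul_eq_mul,
      ih fun i hi => hf i (Finset.mem_insert_of_mem hi), hf a (Finset.mem_insert_self a s)]
    ring

end Derivation

namespace PowerSeries

theorem constantCoeff_one_sub_X_pow {R : Type*} [Ring R] {a : ℕ} (ha : a ≠ 0) :
    constantCoeff (1 - X ^ a : R⟦X⟧) = 1 := by
  simp [zero_pow ha]

section Field

variable {k : Type*} [Field k] {a : ℕ}

theorem inv_one_sub_X_pow_eq_expand (ha : a ≠ 0) :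
    (1 - X ^ a : k⟦X⟧)⁻¹ = expand a ha (mk 1) := by
  rw [PowerSeries.inv_eq_iff_mul_eq_one (by simp [constantCoeff_one_sub_X_pow ha]),
    ← expand_X a ha, ← map_one (expand a ha), ← map_sub, ← map_mul, mk_one_mul_one_sub_eq_one,
    map_one]

theorem coeff_inv_one_sub_X_pow (ha : a ≠ 0) (n : ℕ) :
    coeff n (1 - X ^ a : k⟦X⟧)⁻¹ = if a ∣ n then 1 else 0 := by
  simp [inv_one_sub_X_pow_eq_expand ha, coeff_expand]

theorem X_pow_mul_inv_one_sub_X_pow (ha : a ≠ 0) :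
    X ^ a * (1 - X ^ a : k⟦X⟧)⁻¹ = (1 - X ^ a)⁻¹ - 1 := by
  have h := PowerSeries.mul_inv_cancel (1 - X ^ a : k⟦X⟧) (by simp [constantCoeff_one_sub_X_pow ha])
  linear_combination -h

theorem coeff_inv_one_sub_X_pow_sub_one (ha : a ≠ 0) (n : ℕ) :
    coeff n ((1 - X ^ a : k⟦X⟧)⁻¹ - 1) = if a ∈ n.divisors then 1 else 0 := by
  rw [map_sub, coeff_inv_one_sub_X_pow ha, coeff_one]
  by_cases hn : n = 0 <;> simp [hn, Nat.mem_divisors]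

theorem X_smul_derivative_inv_one_sub_X_pow (ha : a ≠ 0) :
    ((X : k⟦X⟧) • d⁄dX k) (1 - X ^ a)⁻¹ = (1 - X ^ a)⁻¹ * (a • ((1 - X ^ a)⁻¹ - 1)) := by
  rw [Derivation.smul_apply, smul_eq_mul, derivative_inv', map_sub, derivative_one, derivative_pow,
    derivative_X, ← X_pow_mul_inv_one_sub_X_pow ha, nsmul_eq_mul]
  obtain ⟨b, rfl⟩ := Nat.exists_eq_succ_of_ne_zero ha
  simp only [Nat.succ_sub_one, pow_succ]
  ring

open scoped WithPiTopology in
theorem multipliable_inv_one_sub_X_pow [TopologicalSpace k] {a : ℕ → ℕ} (ha : ∀ i, a i ≠ 0)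
    (h : Tendsto a atTop atTop) :
    Multipliable fun i => (1 - X ^ a i : k⟦X⟧)⁻¹ := by
  have hord : Tendsto (fun i => ((1 - X ^ a i : k⟦X⟧)⁻¹ - 1).order) atTop (𝓝 ⊤) := by
    refine ENat.tendsto_nhds_top_iff_natCast_lt.mpr fun n => ?_
    filter_upwards [h.eventually_gt_atTop n] with i hi
    rw [← X_pow_mul_inv_one_sub_X_pow (ha i)]
    calc (n : ℕ∞) < a i := by exact_mod_cast hi
      _ = (X ^ a i : k⟦X⟧).order := (order_X_pow _).symm
      _ ≤ (X ^ a i : k⟦X⟧).order + (1 - X ^ a i : k⟦X⟧)⁻¹.order := le_self_add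
      _ ≤ _ := le_order_mul _ _
  simpa using WithPiTopology.multipliable_one_add_of_tendsto_order_atTop_nhds_top k hord

end Field

open scoped WithPiTopology in
theorem WithPiTopology.continuous_derivative {R : Type*} [CommSemiring R] [TopologicalSpace R]
    [ContinuousMul R] : Continuous (d⁄dX R) :=
  continuous_iff_continuousAt.mpr fun f => (tendsto_iff_coeff_tendsto R _ _ _).mpr fun n => by
    simp_rw [coeff_derivative]
    exact ((continuous_coeff R (n + 1)).mul_const _).tendsto f

end PowerSeries

theorem hasSum_sigmaO :
    HasSum (fun i => (2 * i + 1) • ((1 - X ^ (2 * i + 1) : ℚ⟦X⟧)⁻¹ - 1))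
      (mk fun n => if n = 0 then 0 else (sigmaO n : ℚ)) := by
  refine (WithPiTopology.hasSum_iff_hasSum_coeff ℚ).mpr fun n => ?_
  have hsigma : (if n = 0 then 0 else (sigmaO n : ℚ)) = ∑ d ∈ n.divisors.filter Odd, (d : ℚ) := by
    split_ifs with hn <;> simp [hn, sigmaO]
  rw [coeff_mk, hsigma]
  let f : ℕ → ℚ := fun d => if d ∈ n.divisors.filter Odd then d else 0
  have hf : HasSum f (∑ d ∈ n.divisors.filter Odd, (d : ℚ)) := by
    rw [Finset.sum_congr rfl fun d hd => (if_pos hd).symm]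
    exact hasSum_sum_of_ne_finset_zero fun d hd => if_neg hd
  have hodd : ∀ d ∉ Set.range (fun i => 2 * i + 1), f d = 0 := by
    intro d hd
    refine if_neg fun hmem => hd ?_
    obtain ⟨i, rfl⟩ := (Finset.mem_filter.mp hmem).2
    exact ⟨i, by ring⟩
  have hinj : Function.Injective fun i : ℕ => 2 * i + 1 := fun i j h => by simpa using h
  have hterm : (fun i => coeff n ((2 * i + 1) • ((1 - X ^ (2 * i + 1) : ℚ⟦X⟧)⁻¹ - 1))) =
      f ∘ fun i => 2 * i + 1 := by
    funext i
    rw [map_nsmul, coeff_inv_one_sub_X_pow_sub_one (Nat.succ_ne_zero (2 * i))]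
    simp only [f, Function.comp_apply, Finset.mem_filter, odd_two_mul_add_one, and_true]
    split_ifs <;> simp
  rw [hterm]
  exact (hinj.hasSum_iff hodd).mpr hf

theorem q_mul_T1_deriv :
    X * (d⁄dX ℚ) T1 =
      T1 * PowerSeries.mk fun n => if n = 0 then 0 else (sigmaO n : ℚ) := by
  -- the topology fixed on `ℚ⟦X⟧` above is `WithPiTopology`'s under another name
  have : T2Space ℚ⟦X⟧ := WithPiTopology.instT2Space ℚ
  have : IsTopologicalSemiring ℚ⟦X⟧ := WithPiTopology.instIsTopologicalSemiring ℚ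
  have hodd : Tendsto (fun i => 2 * i + 1) atTop atTop :=
    tendsto_atTop_mono (fun i => (by omega : i ≤ 2 * i + 1)) tendsto_id
  have hT1 : Tendsto (fun N => ∏ i ∈ Finset.range N, (1 - X ^ (2 * i + 1) : ℚ⟦X⟧)⁻¹) atTop
      (𝓝 T1) :=
    (multipliable_inv_one_sub_X_pow (fun i => (2 * i).succ_ne_zero) hodd).hasProd.tendsto_prod_nat
  have hθ : Continuous ((X : ℚ⟦X⟧) • d⁄dX ℚ) := by
    rw [Derivation.coe_smul]
    exact continuous_const.mul WithPiTopology.continuous_derivative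
  rw [← smul_eq_mul, ← Derivation.smul_apply]
  refine tendsto_nhds_unique ((hθ.tendsto T1).comp hT1) ?_
  simp only [Function.comp_def, Derivation.map_prod_of_forall_eq_mul _ _
    fun i _ => X_smul_derivative_inv_one_sub_X_pow (Nat.succ_ne_zero (2 * i))]
  exact hT1.mul hasSum_sigmaO.tendsto_sum_nat
end

section
/- As formal power series in q, ∏_{i=1}^∞ (1 - q^{2i})/(1 - q^{2i-1}) = ∑_{n=0}^∞ q^{n(n+1)/2}. -/
open PowerSeries Finset

noncomputable section GaussAux

abbrev QX := PowerSeries ℚ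

/-- triangular numbers -/
def TT (n : ℕ) : ℕ := n * (n + 1) / 2

lemma two_TT (n : ℕ) : 2 * TT n = n * (n + 1) :=
  Nat.mul_div_cancel' (Nat.even_mul_succ_self n).two_dvd

lemma TT_succ (n : ℕ) : TT (n + 1) = TT n + (n + 1) := by
  have h1 := two_TT n
  have h2 := two_TT (n + 1)
  have h3 : (n+1) * (n+1+1) = n * (n+1) + 2*(n+1) := by ring
  rw [h3] at h2
  omega

lemma le_TT (n : ℕ) : n ≤ TT n := by
  have h1 := two_TT n
  have h2 : n * 2 ≤ n * (n+1) := by nlinarith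
  linarith

lemma TT_strictMono : StrictMono TT := by
  apply strictMono_nat_of_lt_succ
  intro n; rw [TT_succ]; omega

lemma TT_inj : Function.Injective TT := TT_strictMono.injective

open scoped Classical in
/-- The sum side: indicator series of triangular numbers. -/
def SS : QX := PowerSeries.mk fun j => if ∃ k, TT k = j then (1 : ℚ) else 0

/-- congruence mod X^(m+1) -/
def Cg (m : ℕ) (a b : QX) : Prop := (X : QX) ^ (m + 1) ∣ a - b

lemma Cg.refl (m : ℕ) (a : QX) : Cg m a a := by simp [Cg]

lemma Cg.symm {m : ℕ} {a b : QX} (h : Cg m a b) : Cg m b a := by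
  have : (X:QX)^(m+1) ∣ -(a - b) := dvd_neg.2 h
  simpa [Cg, neg_sub] using this

lemma Cg.trans {m : ℕ} {a b c : QX} (h1 : Cg m a b) (h2 : Cg m b c) : Cg m a c := by
  have := dvd_add h1 h2; simpa [Cg] using this

lemma Cg.mul {m : ℕ} {a b c d : QX} (h1 : Cg m a b) (h2 : Cg m c d) :
    Cg m (a * c) (b * d) := by
  have h : a * c - b * d = (a - b) * c + b * (c - d) := by ring
  rw [Cg, h]
  exact dvd_add (h1.mul_right c) (h2.mul_left b)

lemma Cg.mulr {m : ℕ} {a b : QX} (c : QX) (h : Cg m a b) :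
    Cg m (a * c) (b * c) := h.mul (Cg.refl m c)

lemma Cg.mull {m : ℕ} {a b : QX} (c : QX) (h : Cg m a b) :
    Cg m (c * a) (c * b) := (Cg.refl m c).mul h

lemma Cg_X_pow {m t : ℕ} (hm : m < t) (a : QX) : Cg m ((X:QX)^t * a) 0 := by
  rw [Cg, sub_zero]
  exact Dvd.dvd.mul_right (pow_dvd_pow _ (by omega)) a

lemma Cg.add {m : ℕ} {a b c d : QX} (h1 : Cg m a b) (h2 : Cg m c d) :
    Cg m (a + c) (b + d) := by
  have h : a + c - (b + d) = (a - b) + (c - d) := by ring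
  rw [Cg, h]; exact dvd_add h1 h2

lemma Cg_prod_one {m : ℕ} {ι : Type*} (s : Finset ι) (f : ι → QX)
    (h : ∀ i ∈ s, Cg m (f i) 1) : Cg m (∏ i ∈ s, f i) 1 := by
  classical
  induction s using Finset.induction_on with
  | empty => simpa using Cg.refl m 1
  | @insert a s' hx ih =>
    rw [Finset.prod_insert hx]
    have := (h a (by simp)).mul (ih fun i hi => h i (by simp [hi]))
    simpa using this

lemma Cg_sum {m : ℕ} {ι : Type*} (s : Finset ι) (f g : ι → QX)
    (h : ∀ i ∈ s, Cg m (f i) (g i)) :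
    Cg m (∑ i ∈ s, f i) (∑ i ∈ s, g i) := by
  classical
  induction s using Finset.induction_on with
  | empty => simpa using Cg.refl m 0
  | @insert a s' hx ih =>
    rw [Finset.sum_insert hx, Finset.sum_insert hx]
    exact (h a (by simp)).add (ih fun i hi => h i (by simp [hi]))

lemma Cg_coeff {m : ℕ} {a b : QX} (h : Cg m a b) {j : ℕ} (hj : j ≤ m) :
    coeff j a = coeff j b := by
  rw [Cg, PowerSeries.X_pow_dvd_iff] at h
  have := h j (by omega)
  rw [map_sub] at this
  linarith

lemma Cg_of_coeff {m : ℕ} {a b : QX} (h : ∀ j ≤ m, coeff j a = coeff j b) :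
    Cg m a b := by
  rw [Cg, PowerSeries.X_pow_dvd_iff]
  intro j hj
  rw [map_sub, h j (by omega), sub_self]

lemma Cg_two_cancel {m : ℕ} {a b : QX} (h : Cg m (2 * a) (2 * b)) : Cg m a b := by
  apply Cg_of_coeff
  intro j hj
  have := Cg_coeff h hj
  rw [two_mul, two_mul, map_add, map_add] at this
  linarith

/-- cancel a unit factor -/
lemma Cg_unit_cancel {m : ℕ} {a b u v : QX} (huv : u * v = 1)
    (h : Cg m (a * u) (b * u)) : Cg m a b := by
  have := h.mulr v
  rw [mul_assoc, mul_assoc, huv, mul_one, mul_one] at this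
  exact this



/-- Gaussian binomial coefficient (base X) as a power series. -/
noncomputable def gb : ℕ → ℕ → QX
  | 0, 0 => 1
  | 0, _+1 => 0
  | _+1, 0 => 1
  | M+1, k+1 => gb M (k+1) + X^(M-k) * gb M k

@[simp] lemma gb_zero (M : ℕ) : gb M 0 = 1 := by cases M <;> rfl

lemma gb_succ (M k : ℕ) : gb (M+1) (k+1) = gb M (k+1) + X^(M-k) * gb M k := rfl

lemma gb_eq_zero : ∀ {M k : ℕ}, M < k → gb M k = 0 := by
  intro M
  induction M with
  | zero => intro k hk; cases k with | zero => omega | succ k => rfl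
  | succ M ih =>
    intro k hk
    cases k with
    | zero => omega
    | succ k =>
      rw [gb_succ, ih (by omega), ih (by omega), mul_zero, add_zero]

@[simp] lemma gb_diag : ∀ M : ℕ, gb M M = 1 := by
  intro M
  induction M with
  | zero => rfl
  | succ M ih =>
    rw [gb_succ, gb_eq_zero (by omega), ih, Nat.sub_self, pow_zero, zero_add, one_mul]

/-- partial products -/
def pall (K : ℕ) : QX := ∏ i ∈ range K, (1 - X^(i+1))
def pp (K : ℕ) : QX := ∏ i ∈ range K, (1 + X^(i+1))
def podd (K : ℕ) : QX := ∏ i ∈ range K, (1 - X^(2*i+1))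
def pev (K : ℕ) : QX := ∏ i ∈ range K, (1 - X^(2*i+2))

@[simp] lemma pall_zero : pall 0 = 1 := rfl
@[simp] lemma pp_zero : pp 0 = 1 := rfl
lemma pall_succ (K : ℕ) : pall (K+1) = pall K * (1 - X^(K+1)) := prod_range_succ _ _
lemma pp_succ (K : ℕ) : pp (K+1) = pp K * (1 + X^(K+1)) := prod_range_succ _ _
lemma podd_succ (K : ℕ) : podd (K+1) = podd K * (1 - X^(2*K+1)) := prod_range_succ _ _
lemma pev_succ (K : ℕ) : pev (K+1) = pev K * (1 - X^(2*K+2)) := prod_range_succ _ _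

lemma podd_mul_pev (K : ℕ) : podd K * pev K = pall (2*K) := by
  induction K with
  | zero => simp [podd, pev]
  | succ K ih =>
    rw [podd_succ, pev_succ, show 2*(K+1) = 2*K+1+1 by ring, pall_succ, pall_succ, ← ih,
      show 2*K+1+1 = 2*K+2 by ring]
    ring

lemma pev_eq (K : ℕ) : pev K = pall K * pp K := by
  induction K with
  | zero => simp [pev]
  | succ K ih =>
    rw [pev_succ, pall_succ, pp_succ, ih]
    have e : (1 - (X:QX)^(2*K+2)) = (1 - X^(K+1)) * (1 + X^(K+1)) := by
      have : (X:QX)^(K+1) * X^(K+1) = X^(2*K+2) := by rw [← pow_add]; congr 1; omega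
      rw [← this]; ring
    rw [e]; ring

/-- GB2: product formula for Gaussian binomials -/
lemma gb_mul_pall : ∀ M k : ℕ, k ≤ M → gb M k * pall k * pall (M - k) = pall M := by
  intro M
  induction M with
  | zero => intro k hk; interval_cases k; simp
  | succ M ih =>
    intro k hk
    cases k with
    | zero => simp
    | succ k =>
      rcases Nat.lt_or_ge k M with hkM | hkM
      · rw [gb_succ]
        have e1 : pall (M + 1 - (k+1)) = pall (M - k - 1) * (1 - X^(M-k)) := by
          rw [show M + 1 - (k+1) = (M - k - 1) + 1 by omega, pall_succ,
            show M - k - 1 + 1 = M - k by omega]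
        have h1 : gb M (k+1) * pall (k+1) * pall (M - (k+1)) = pall M :=
          ih (k+1) (by omega)
        have h2 : gb M k * pall k * pall (M - k) = pall M := ih k (by omega)
        have e3 : M - (k+1) = M - k - 1 := by omega
        have e5 : (X:QX)^(M-k) * X^(k+1) = X^(M+1) := by
          rw [← pow_add]; congr 1; omega
        calc (gb M (k+1) + X^(M-k) * gb M k) * pall (k+1) * pall (M + 1 - (k+1))
            = (gb M (k+1) * pall (k+1) * pall (M - (k+1))) * (1 - X^(M-k))
              + X^(M-k) * ((gb M k * pall k * pall (M-k)) * (1 - X^(k+1))) := by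
              rw [e1, e3, pall_succ k]
              have e4 : pall (M - k) = pall (M - k - 1) * (1 - X^(M-k)) := by
                rw [show M - k = (M - k - 1) + 1 by omega, pall_succ,
                  show M - k - 1 + 1 = M - k by omega]
              rw [e4]; ring
          _ = pall M * (1 - X^(M-k)) + X^(M-k) * (pall M * (1 - X^(k+1))) := by rw [h1, h2]
          _ = pall M * (1 - X^(M+1)) := by rw [← e5]; ring
          _ = pall (M+1) := (pall_succ M).symm
      · have : k = M := by omega
        subst this
        simp [Nat.sub_self, pall_succ]



lemma two_dvd_mul_pred (k : ℕ) : 2 ∣ k * (k - 1) := by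
  cases k with
  | zero => simp
  | succ k =>
    have : (k+1) * (k+1-1) = k * (k+1) := by simp [Nat.mul_comm]
    rw [this]
    exact (Nat.even_mul_succ_self k).two_dvd

lemma tri_half_succ (k : ℕ) : (k+1)*k/2 = k*(k-1)/2 + k := by
  have h1 : 2 * (k*(k-1)/2) = k*(k-1) := Nat.mul_div_cancel' (two_dvd_mul_pred k)
  have h2 : 2 * ((k+1)*k/2) = (k+1)*k := by
    have : (k+1)*k = (k+1)*((k+1)-1) := by simp
    rw [this]
    exact Nat.mul_div_cancel' (two_dvd_mul_pred (k+1))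
  have h3 : (k+1)*k = k*(k-1) + 2*k := by
    cases k with
    | zero => simp
    | succ k =>
      have h : (k+1) - 1 = k := rfl
      rw [h]; ring
  omega

/-- GB1 : the q-binomial theorem, reflected form -/
lemma gb_prod (c M : ℕ) :
    ∏ i ∈ range M, ((X:QX)^c + X^i)
      = ∑ k ∈ range (M+1), gb M k * X^(k*(k-1)/2 + c*(M-k)) := by
  induction M with
  | zero => simp
  | succ M ih =>
    rw [prod_range_succ, ih, Finset.sum_mul]
    have lhs_eq : ∑ k ∈ range (M+1),
        gb M k * X^(k*(k-1)/2 + c*(M-k)) * ((X:QX)^c + X^M)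
        = (∑ k ∈ range (M+1), gb M k * X^(k*(k-1)/2 + c*(M+1-k)))
          + ∑ k ∈ range (M+1), (X:QX)^(M-k) * gb M k * X^((k+1)*k/2 + c*(M+1-(k+1))) := by
      rw [← Finset.sum_add_distrib]
      apply Finset.sum_congr rfl
      intro k hk
      rw [Finset.mem_range] at hk
      have hkM : k ≤ M := by omega
      have eA : k*(k-1)/2 + c*(M+1-k) = (k*(k-1)/2 + c*(M-k)) + c := by
        have : M+1-k = (M-k)+1 := by omega
        rw [this, Nat.mul_add, Nat.mul_one]; omega
      have eB : (M-k) + ((k+1)*k/2 + c*(M+1-(k+1))) = (k*(k-1)/2 + c*(M-k)) + M := by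
        have h1 : M+1-(k+1) = M-k := by omega
        rw [h1, tri_half_succ]
        omega
      rw [eA, pow_add]
      have : (X:QX)^(M-k) * gb M k * X^((k+1)*k/2 + c*(M+1-(k+1)))
          = gb M k * X^((M-k) + ((k+1)*k/2 + c*(M+1-(k+1)))) := by
        rw [pow_add]; ring
      rw [this, eB, pow_add]
      ring
    rw [lhs_eq]
    -- now massage the RHS
    rw [Finset.sum_range_succ'
      (fun k => gb (M+1) k * X^(k*(k-1)/2 + c*(M+1-k))) (M+1)]
    have rhs1 : ∀ k, gb (M+1) (k+1) * (X:QX)^((k+1)*(k+1-1)/2 + c*(M+1-(k+1)))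
        = gb M (k+1) * X^((k+1)*((k+1)-1)/2 + c*(M+1-(k+1)))
          + (X:QX)^(M-k) * gb M k * X^((k+1)*k/2 + c*(M+1-(k+1))) := by
      intro k
      rw [gb_succ]
      have : (k+1) - 1 = k := by omega
      rw [this]
      ring
    simp only [rhs1]
    rw [Finset.sum_add_distrib]
    have first : (∑ k ∈ range (M+1),
          gb M (k+1) * (X:QX)^((k+1)*((k+1)-1)/2 + c*(M+1-(k+1))))
          + gb (M+1) 0 * (X:QX)^(0*(0-1)/2 + c*(M+1-0))
        = ∑ k ∈ range (M+1), gb M k * X^(k*(k-1)/2 + c*(M+1-k)) := by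
      have peel := Finset.sum_range_succ'
        (fun k => gb M k * (X:QX)^(k*(k-1)/2 + c*(M+1-k))) (M+1)
      have last := Finset.sum_range_succ
        (fun k => gb M k * (X:QX)^(k*(k-1)/2 + c*(M+1-k))) (M+1)
      simp only [gb_eq_zero (show M < M+1 by omega), zero_mul, add_zero] at last
      rw [← last, peel]
      simp
    rw [add_assoc, add_comm (∑ k ∈ range (M+1), (X:QX)^(M-k) * gb M k * _), ← add_assoc]
    rw [first]

lemma prod_split (N : ℕ) (hN : 1 ≤ N) :
    ∏ i ∈ range (2*N), ((X:QX)^(N-1) + X^i)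
      = X^(3*(N*(N-1))/2) * (2 * ((1 + X^N) * pp (N-1) ^ 2)) := by
  rw [show 2*N = N + N by ring, prod_range_add]
  have part1 : ∏ i ∈ range N, ((X:QX)^(N-1) + X^i)
      = X^(N*(N-1)/2) * (2 * pp (N-1)) := by
    have e1 : ∀ i ∈ range N, ((X:QX)^(N-1) + X^i) = X^i * (1 + X^(N-1-i)) := by
      intro i hi
      rw [Finset.mem_range] at hi
      have : (X:QX)^i * X^(N-1-i) = X^(N-1) := by rw [← pow_add]; congr 1; omega
      rw [mul_add, mul_one, this]; ring
    have hsplit : ∏ j ∈ range N, (1 + (X:QX)^j) = 2 * pp (N-1) := by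
      conv_lhs => rw [show N = (N-1)+1 by omega]
      rw [Finset.prod_range_succ' (fun j => 1 + (X:QX)^j) (N-1)]
      rw [pp]
      norm_num
      ring
    rw [Finset.prod_congr rfl e1, Finset.prod_mul_distrib,
      Finset.prod_pow_eq_pow_sum, Finset.sum_range_id,
      Finset.prod_range_reflect (fun j => 1 + (X:QX)^j) N, hsplit]
  have part2 : ∏ i ∈ range N, ((X:QX)^(N-1) + X^(N+i))
      = X^((N-1)*N) * (pp (N-1) * (1 + X^N)) := by
    have e1 : ∀ i ∈ range N, ((X:QX)^(N-1) + X^(N+i)) = X^(N-1) * (1 + X^(i+1)) := by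
      intro i hi
      have : (X:QX)^(N-1) * X^(i+1) = X^(N+i) := by rw [← pow_add]; congr 1; omega
      rw [mul_add, mul_one, this]
    rw [Finset.prod_congr rfl e1, Finset.prod_mul_distrib, Finset.prod_const, ← pow_mul,
      Finset.card_range]
    have : pp N = pp (N-1) * (1 + X^N) := by
      rw [show N = (N-1)+1 by omega, pp_succ, show N-1+1 = N by omega]
    rw [← pp, this]
  rw [part1, part2]
  have hexp : N*(N-1)/2 + (N-1)*N = 3*(N*(N-1))/2 := by
    have h1 : 2 * (N*(N-1)/2) = N*(N-1) := Nat.mul_div_cancel' (two_dvd_mul_pred N)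
    have h2 : 2 * (3*(N*(N-1))/2) = 3*(N*(N-1)) := by
      apply Nat.mul_div_cancel'
      exact Dvd.dvd.mul_left (two_dvd_mul_pred N) 3
    have h3 : (N-1)*N = N*(N-1) := Nat.mul_comm _ _
    omega
  rw [← hexp, pow_add]
  ring

lemma expo_hi (N d : ℕ) (hN : 1 ≤ N) (hd : d ≤ N) :
    (N+d)*((N+d)-1)/2 + (N-1)*(2*N-(N+d)) = 3*(N*(N-1))/2 + TT d := by
  have h2N : 2*N - (N+d) = N - d := by omega
  rw [h2N]
  have hA : 2 * ((N+d)*((N+d)-1)/2) = (N+d)*((N+d)-1) :=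
    Nat.mul_div_cancel' (two_dvd_mul_pred (N+d))
  have hB : 2 * (3*(N*(N-1))/2) = 3*(N*(N-1)) :=
    Nat.mul_div_cancel' (Dvd.dvd.mul_left (two_dvd_mul_pred N) 3)
  have hT : 2 * TT d = d * (d+1) := two_TT d
  have key : (N+d)*((N+d)-1) + 2*((N-1)*(N-d)) = 3*(N*(N-1)) + d*(d+1) := by
    zify [hd, hN, show 1 ≤ N+d by omega]
    ring
  omega

lemma expo_lo (N d : ℕ) (hN : 1 ≤ N) (hd : d ≤ N-1) :
    (N-1-d)*((N-1-d)-1)/2 + (N-1)*(2*N-(N-1-d)) = 3*(N*(N-1))/2 + TT d := by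
  have h2N : 2*N - (N-1-d) = N+1+d := by omega
  rw [h2N]
  have hA : 2 * ((N-1-d)*((N-1-d)-1)/2) = (N-1-d)*((N-1-d)-1) :=
    Nat.mul_div_cancel' (two_dvd_mul_pred (N-1-d))
  have hB : 2 * (3*(N*(N-1))/2) = 3*(N*(N-1)) :=
    Nat.mul_div_cancel' (Dvd.dvd.mul_left (two_dvd_mul_pred N) 3)
  have hT : 2 * TT d = d * (d+1) := two_TT d
  rcases Nat.lt_or_ge d (N-1) with hdlt | hdge
  · have key : (N-1-d)*((N-1-d)-1) + 2*((N-1)*(N+1+d)) = 3*(N*(N-1)) + d*(d+1) := by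
      zify [hN, show d + 1 ≤ N - 1 from hdlt, show 1 ≤ N - 1 - d by omega,
        show d ≤ N - 1 by omega]
      ring
    omega
  · have hdeq : d = N-1 := by omega
    subst hdeq
    have h0 : N-1-(N-1) = 0 := by omega
    rw [h0]
    have key : 2*((N-1)*(N+1+(N-1))) = 3*(N*(N-1)) + (N-1)*((N-1)+1) := by
      zify [hN]
      ring
    omega

lemma diamond (N : ℕ) (hN : 1 ≤ N) :
    2 * ((1 + (X:QX)^N) * pp (N-1) ^ 2)
      = (∑ d ∈ range (N+1), gb (2*N) (N+d) * X^(TT d))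
        + ∑ d ∈ range N, gb (2*N) (N-1-d) * X^(TT d) := by
  have main := gb_prod (N-1) (2*N)
  rw [prod_split N hN] at main
  set B := 3*(N*(N-1))/2 with hB
  set g : ℕ → QX := fun k => gb (2*N) k * X^(k*(k-1)/2 + (N-1)*(2*N-k)) with hg
  have hsum : ∑ k ∈ range (2*N+1), g k
      = (∑ d ∈ range N, g (N-1-d)) + ∑ d ∈ range (N+1), g (N+d) := by
    rw [show 2*N+1 = N + (N+1) by ring, Finset.sum_range_add, Finset.sum_range_reflect]
  have hlo : ∑ d ∈ range N, g (N-1-d)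
      = X^B * ∑ d ∈ range N, gb (2*N) (N-1-d) * X^(TT d) := by
    rw [Finset.mul_sum]
    apply Finset.sum_congr rfl
    intro d hd
    rw [Finset.mem_range] at hd
    rw [hg]
    simp only []
    rw [expo_lo N d hN (by omega), pow_add]
    ring
  have hhi : ∑ d ∈ range (N+1), g (N+d)
      = X^B * ∑ d ∈ range (N+1), gb (2*N) (N+d) * X^(TT d) := by
    rw [Finset.mul_sum]
    apply Finset.sum_congr rfl
    intro d hd
    rw [Finset.mem_range] at hd
    rw [hg]
    simp only []
    rw [expo_hi N d hN (by omega), pow_add]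
    ring
  rw [hsum, hlo, hhi, ← mul_add] at main
  have hX : (X:QX)^B ≠ 0 := pow_ne_zero _ PowerSeries.X_ne_zero
  have := mul_left_cancel₀ hX main
  rw [this]
  ring

lemma constCoeff_one_sub_pow (k : ℕ) (hk : 1 ≤ k) :
    constantCoeff (1 - (X:QX)^k) = 1 := by
  rw [map_sub, map_one, map_pow, PowerSeries.constantCoeff_X]
  rw [zero_pow (by omega)]
  ring

lemma constCoeff_pall (K : ℕ) : constantCoeff (pall K) = 1 := by
  rw [pall, map_prod]
  apply Finset.prod_eq_one
  intro i _
  exact constCoeff_one_sub_pow _ (by omega)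

lemma constCoeff_pev (K : ℕ) : constantCoeff (pev K) = 1 := by
  rw [pev, map_prod]
  apply Finset.prod_eq_one
  intro i _
  exact constCoeff_one_sub_pow _ (by omega)

lemma constCoeff_podd (K : ℕ) : constantCoeff (podd K) = 1 := by
  rw [podd, map_prod]
  apply Finset.prod_eq_one
  intro i _
  exact constCoeff_one_sub_pow _ (by omega)

lemma Cg_one_sub_pow {m k : ℕ} (hk : m + 1 ≤ k) : Cg m (1 - (X:QX)^k) 1 := by
  rw [Cg]
  have : (1 - (X:QX)^k) - 1 = -(X^k) := by ring
  rw [this]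
  exact dvd_neg.2 (pow_dvd_pow _ hk)

lemma Cg_pall {m j : ℕ} (hj : m + 1 ≤ j) : Cg m (pall j) (pall (m+1)) := by
  have : pall j = pall (m+1) * ∏ x ∈ range (j - (m+1)), (1 - X^((m+1)+x+1)) := by
    rw [pall, show j = (m+1) + (j - (m+1)) by omega, prod_range_add, ← pall]
    congr 1
    rw [show (m+1) + (j-(m+1)) = j by omega]
  rw [this]
  have h1 : Cg m (∏ x ∈ range (j - (m+1)), (1 - (X:QX)^((m+1)+x+1))) 1 :=
    Cg_prod_one _ _ (fun i _ => Cg_one_sub_pow (by omega))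
  have := ((Cg.refl m (pall (m+1))).mul h1)
  simpa using this

/-- The truncated triangular sum. -/
def WW (m : ℕ) : QX := ∑ d ∈ range (m+1), (X:QX)^(TT d)

lemma Cg_WW_SS (m : ℕ) : Cg m (WW m) SS := by
  apply Cg_of_coeff
  intro j hj
  rw [WW, map_sum]
  rw [SS, PowerSeries.coeff_mk]
  by_cases h : ∃ k, TT k = j
  · obtain ⟨k, hk⟩ := h
    rw [if_pos ⟨k, hk⟩]
    have hkm : k ∈ range (m+1) := by
      rw [Finset.mem_range]
      have := le_TT k
      omega
    rw [Finset.sum_eq_single_of_mem k hkm]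
    · rw [PowerSeries.coeff_X_pow, if_pos hk.symm]
    · intro d _ hd
      rw [PowerSeries.coeff_X_pow, if_neg]
      intro hdj
      exact hd (TT_inj (hk ▸ hdj.symm))
  · rw [if_neg h]
    apply Finset.sum_eq_zero
    intro d _
    rw [PowerSeries.coeff_X_pow, if_neg]
    intro hdj
    exact h ⟨d, hdj.symm⟩

section Star

variable (m : ℕ)

/-- the inverse of `pall (m+1)` -/
def uu (m : ℕ) : QX := (pall (m+1))⁻¹

lemma pall_mul_uu : pall (m+1) * uu m = 1 :=
  PowerSeries.mul_inv_cancel _ (by rw [constCoeff_pall]; norm_num)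

lemma Cg_gb {k NN : ℕ} (hk1 : m + 1 ≤ k) (hk2 : m + 1 ≤ 2*NN - k) (hk3 : k ≤ 2*NN) :
    Cg m (gb (2*NN) k) (uu m) := by
  have hprod := gb_mul_pall (2*NN) k hk3
  have c1 : Cg m (gb (2*NN) k * pall k * pall (2*NN - k))
      (gb (2*NN) k * pall (m+1) * pall (m+1)) :=
    ((Cg.refl m _).mul (Cg_pall hk1)).mul (Cg_pall hk2)
  rw [hprod] at c1
  have c2 : Cg m (pall (2*NN)) (pall (m+1)) := Cg_pall (by omega)
  have c3 : Cg m (gb (2*NN) k * pall (m+1) * pall (m+1)) (pall (m+1)) :=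
    c1.symm.trans c2
  have c3' : Cg m (gb (2*NN) k * pall (m+1) * pall (m+1)) (1 * pall (m+1)) := by
    rwa [one_mul]
  have c4 : Cg m (gb (2*NN) k * pall (m+1)) 1 := Cg_unit_cancel (pall_mul_uu m) c3'
  have c5 : Cg m (gb (2*NN) k * pall (m+1)) (uu m * pall (m+1)) := by
    have h1 : uu m * pall (m+1) = 1 := by rw [mul_comm]; exact pall_mul_uu m
    rwa [h1]
  exact Cg_unit_cancel (pall_mul_uu m) c5

end Star

lemma Cg_of_eq {m : ℕ} {a b : QX} (h : a = b) : Cg m a b := by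
  rw [h]; exact Cg.refl m b

lemma starCg (m : ℕ) : Cg m (pp (2*m+1) ^ 2 * pall (m+1)) SS := by
  have hd := diamond (2*m+2) (by omega)
  have hNm : 2*m+2 - 1 = 2*m+1 := by omega
  rw [hNm] at hd
  set N := 2*m+2 with hN
  -- the high sum
  have chi : Cg m (∑ d ∈ range (N+1), gb (2*N) (N+d) * X^(TT d))
      (uu m * WW m) := by
    rw [show N+1 = (m+1) + (N-m) by omega, Finset.sum_range_add]
    have tail : Cg m (∑ x ∈ range (N-m),
        gb (2*N) (N+((m+1)+x)) * (X:QX)^(TT ((m+1)+x)))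
        (∑ x ∈ range (N-m), (0:QX)) := by
      apply Cg_sum
      intro x hx
      beta_reduce
      have h1 : m < TT ((m+1)+x) := by have := le_TT ((m+1)+x); omega
      have h2 : gb (2*N) (N+((m+1)+x)) * (X:QX)^(TT ((m+1)+x))
          = X^(TT ((m+1)+x)) * gb (2*N) (N+((m+1)+x)) := by ring
      rw [h2]
      exact Cg_X_pow h1 _
    rw [Finset.sum_const, smul_zero] at tail
    have head : Cg m (∑ d ∈ range (m+1), gb (2*N) (N+d) * (X:QX)^(TT d))
        (∑ d ∈ range (m+1), uu m * (X:QX)^(TT d)) := by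
      apply Cg_sum
      intro d hd'
      beta_reduce
      rw [Finset.mem_range] at hd'
      apply Cg.mulr
      apply Cg_gb m (by omega) (by omega) (by omega)
    have := head.add tail
    rw [add_zero, ← Finset.mul_sum] at this
    exact this
  -- the low sum
  have clo : Cg m (∑ d ∈ range N, gb (2*N) (2*m+1-d) * X^(TT d))
      (uu m * WW m) := by
    rw [show N = (m+1) + (m+1) by omega, Finset.sum_range_add]
    have tail : Cg m (∑ x ∈ range (m+1),
        gb (2*((m+1)+(m+1))) (2*m+1-((m+1)+x)) * (X:QX)^(TT ((m+1)+x)))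
        (∑ x ∈ range (m+1), (0:QX)) := by
      apply Cg_sum
      intro x hx
      beta_reduce
      have h1 : m < TT ((m+1)+x) := by have := le_TT ((m+1)+x); omega
      have h2 : gb (2*((m+1)+(m+1))) (2*m+1-((m+1)+x)) * (X:QX)^(TT ((m+1)+x))
          = X^(TT ((m+1)+x)) * gb (2*((m+1)+(m+1))) (2*m+1-((m+1)+x)) := by ring
      rw [h2]
      exact Cg_X_pow h1 _
    rw [Finset.sum_const, smul_zero] at tail
    have head : Cg m (∑ d ∈ range (m+1),
        gb (2*((m+1)+(m+1))) (2*m+1-d) * (X:QX)^(TT d))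
        (∑ d ∈ range (m+1), uu m * (X:QX)^(TT d)) := by
      apply Cg_sum
      intro d hd'
      beta_reduce
      rw [Finset.mem_range] at hd'
      apply Cg.mulr
      apply Cg_gb m (by omega) (by omega) (by omega)
    have := head.add tail
    rw [add_zero, ← Finset.mul_sum] at this
    exact this
  have csum : Cg m (2 * ((1 + (X:QX)^N) * pp (2*m+1)^2)) (uu m * WW m + uu m * WW m) :=
    (Cg_of_eq hd).trans (chi.add clo)
  have hlhs : Cg m (2 * (pp (2*m+1)^2)) (2 * ((1 + (X:QX)^N) * pp (2*m+1)^2)) := by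
    have h1 : Cg m (1 : QX) (1 + (X:QX)^N) := by
      apply Cg.symm
      have h0 : (1 + (X:QX)^N) - 1 = X^N := by ring
      rw [Cg, h0]
      exact pow_dvd_pow _ (by omega)
    have := (Cg.refl m (2:QX)).mul (h1.mul (Cg.refl m (pp (2*m+1)^2)))
    simpa [one_mul] using this
  have c2 : Cg m (2 * (pp (2*m+1)^2)) (2 * (uu m * WW m)) := by
    have h4 := hlhs.trans csum
    have h2 : uu m * WW m + uu m * WW m = 2 * (uu m * WW m) := by ring
    rwa [h2] at h4
  have c3 : Cg m (pp (2*m+1)^2) (uu m * WW m) := Cg_two_cancel c2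
  have c4 : Cg m (pp (2*m+1)^2 * pall (m+1)) ((uu m * WW m) * pall (m+1)) :=
    c3.mulr _
  have h3 : (uu m * WW m) * pall (m+1) = WW m := by
    have h5 : (uu m * WW m) * pall (m+1) = WW m * (pall (m+1) * uu m) := by ring
    rw [h5, pall_mul_uu, mul_one]
  rw [h3] at c4
  exact c4.trans (Cg_WW_SS m)

/-- the key congruence -/
lemma key (m : ℕ) : Cg m (pev (2*m+1)) (SS * podd (2*m+1)) := by
  set R := 2*m+1 with hR
  have hpev_unit : pev R * (pev R)⁻¹ = 1 :=
    PowerSeries.mul_inv_cancel _ (by rw [constCoeff_pev]; norm_num)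
  apply Cg_unit_cancel hpev_unit
  -- goal : Cg m (pev R * pev R) (SS * podd R * pev R)
  have e1 : pev R * pev R = (pall R * pall R) * pp R ^ 2 := by
    rw [pev_eq]; ring
  have e2 : SS * podd R * (pev R) = SS * pall (2*R) := by
    rw [mul_assoc, podd_mul_pev]
  have c1 : Cg m ((pall R * pall R) * pp R ^ 2)
      ((pall (m+1) * pall (m+1)) * pp R ^ 2) :=
    ((Cg_pall (by omega)).mul (Cg_pall (by omega))).mulr _
  have c2 : Cg m (SS * pall (2*R)) ((pp R ^2 * pall (m+1)) * pall (m+1)) :=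
    ((starCg m).symm.mul (Cg_pall (m := m) (j := 2*R) (by omega)))
  have c3 : (pp R ^2 * pall (m+1)) * pall (m+1)
      = (pall (m+1) * pall (m+1)) * pp R ^ 2 := by ring
  rw [c3] at c2
  rw [e1, e2]
  exact c1.trans c2.symm

lemma inv_odd_unit (i : ℕ) :
    (1 - (X:QX)^(2*i+1)) * (1 - (X:QX)^(2*i+1))⁻¹ = 1 :=
  PowerSeries.mul_inv_cancel _ (by rw [constCoeff_one_sub_pow _ (by omega)]; norm_num)

lemma Cg_FF_one {m i : ℕ} (hi : m ≤ 2*i) :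
    Cg m ((1 - (X:QX)^(2*(i+1))) * (1 - (X:QX)^(2*i+1))⁻¹) 1 := by
  have h1 : Cg m (1 - (X:QX)^(2*(i+1))) 1 := Cg_one_sub_pow (by omega)
  have h2 : Cg m ((1 - (X:QX)^(2*i+1))⁻¹) 1 := by
    rw [Cg]
    have h0 : (1 - (X:QX)^(2*i+1))⁻¹ - 1 = (1 - X^(2*i+1))⁻¹ * X^(2*i+1) := by
      have hc := inv_odd_unit i
      calc (1 - (X:QX)^(2*i+1))⁻¹ - 1
          = (1 - (X:QX)^(2*i+1))⁻¹ - (1 - X^(2*i+1)) * (1 - X^(2*i+1))⁻¹ := by rw [hc]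
        _ = (1 - X^(2*i+1))⁻¹ * X^(2*i+1) := by ring
    rw [h0]
    exact Dvd.dvd.mul_left (pow_dvd_pow _ (by omega)) _
  have := h1.mul h2
  simpa using this

lemma prod_FF_range (n : ℕ) :
    Cg n (∏ i ∈ range (2*n+1), ((1 - (X:QX)^(2*(i+1))) * (1 - (X:QX)^(2*i+1))⁻¹)) SS := by
  set R := 2*n+1 with hR
  set V := ∏ i ∈ range R, (1 - (X:QX)^(2*i+1))⁻¹ with hV
  have hsplit : ∏ i ∈ range R, ((1 - (X:QX)^(2*(i+1))) * (1 - (X:QX)^(2*i+1))⁻¹)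
      = pev R * V := by
    rw [hV, pev, ← Finset.prod_mul_distrib]
    apply Finset.prod_congr rfl
    intro i _
    rw [show 2*(i+1) = 2*i+2 from by ring]
  have hpoddV : podd R * V = 1 := by
    rw [hV, podd, ← Finset.prod_mul_distrib]
    apply Finset.prod_eq_one
    intro i _
    exact inv_odd_unit i
  have c1 : Cg n (pev R * V) (SS * podd R * V) := (key n).mulr V
  have e1 : SS * podd R * V = SS := by rw [mul_assoc, hpoddV, mul_one]
  rw [hsplit]
  rw [e1] at c1
  exact c1

lemma coeff_prod_FF (n : ℕ) (s : Finset ℕ) (hs : range (2*n+1) ⊆ s) :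
    coeff n (∏ i ∈ s, ((1 - (X:QX)^(2*(i+1))) * (1 - (X:QX)^(2*i+1))⁻¹))
      = coeff n SS := by
  rw [← Finset.prod_sdiff hs]
  have h1 : Cg n (∏ i ∈ s \ range (2*n+1),
      ((1 - (X:QX)^(2*(i+1))) * (1 - (X:QX)^(2*i+1))⁻¹)) 1 :=
    Cg_prod_one _ _ (fun i hi => by
      rw [Finset.mem_sdiff, Finset.mem_range] at hi
      exact Cg_FF_one (by omega))
  have h2 := h1.mul (prod_FF_range n)
  rw [one_mul] at h2
  exact Cg_coeff h2 (le_refl n)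

lemma coeff_sum_tri (n : ℕ) (s : Finset ℕ) (hs : range (n+1) ⊆ s) :
    coeff n (∑ k ∈ s, (X:QX)^(TT k)) = coeff n SS := by
  rw [map_sum, SS, PowerSeries.coeff_mk]
  by_cases h : ∃ k, TT k = n
  · obtain ⟨k, hk⟩ := h
    rw [if_pos ⟨k, hk⟩]
    have hkm : k ∈ s := by
      apply hs
      rw [Finset.mem_range]
      have := le_TT k
      omega
    rw [Finset.sum_eq_single_of_mem k hkm]
    · rw [PowerSeries.coeff_X_pow, if_pos hk.symm]
    · intro d _ hd
      rw [PowerSeries.coeff_X_pow, if_neg]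
      intro hdj
      exact hd (TT_inj (hk ▸ hdj.symm))
  · rw [if_neg h]
    apply Finset.sum_eq_zero
    intro d _
    rw [PowerSeries.coeff_X_pow, if_neg]
    intro hdj
    exact h ⟨d, hdj.symm⟩

lemma apply_eq_coeff (F : QX) (d : Unit →₀ ℕ) : F d = coeff (d ()) F := by
  have h1 : coeff (d ()) F = MvPowerSeries.coeff (Finsupp.single () (d ())) F := rfl
  rw [h1, MvPowerSeries.coeff_apply]
  congr 1
  apply Finsupp.ext
  intro u
  cases u
  simp

end GaussAux

instance : T2Space (PowerSeries ℚ) :=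
  inferInstanceAs (T2Space ((Unit →₀ ℕ) → ℚ))

lemma hasProdFF :
    HasProd (fun i : ℕ => (1 - (X : PowerSeries ℚ) ^ (2 * (i + 1))) *
      (1 - (X : PowerSeries ℚ) ^ (2 * i + 1))⁻¹) SS := by
  rw [HasProd]
  apply tendsto_pi_nhds.mpr
  intro d
  apply Filter.Tendsto.congr' (f₁ := fun _ => SS d) _ tendsto_const_nhds
  filter_upwards [Filter.eventually_ge_atTop (range (2*(d ())+1))] with s hsle
  have hsub : range (2*(d ())+1) ⊆ s := Finset.le_iff_subset.mp hsle
  rw [apply_eq_coeff SS d,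
    apply_eq_coeff (∏ b ∈ s, ((1 - (X:QX)^(2*(b+1))) * (1 - (X:QX)^(2*b+1))⁻¹)) d]
  exact (coeff_prod_FF (d ()) s hsub).symm

lemma hasSumTri :
    HasSum (fun n : ℕ => (X : PowerSeries ℚ) ^ (n * (n + 1) / 2)) SS := by
  rw [HasSum]
  apply tendsto_pi_nhds.mpr
  intro d
  apply Filter.Tendsto.congr' (f₁ := fun _ => SS d) _ tendsto_const_nhds
  filter_upwards [Filter.eventually_ge_atTop (range ((d ())+1))] with s hsle
  have hsub : range ((d ())+1) ⊆ s := Finset.le_iff_subset.mp hsle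
  rw [apply_eq_coeff SS d, apply_eq_coeff (∑ b ∈ s, (X:QX)^(b*(b+1)/2)) d]
  exact (coeff_sum_tri (d ()) s hsub).symm

theorem gauss_triangular_product :
    (∏' i : ℕ, ((1 - (X : PowerSeries ℚ) ^ (2 * (i + 1))) *
        (1 - (X : PowerSeries ℚ) ^ (2 * i + 1))⁻¹)) =
      ∑' n : ℕ, (X : PowerSeries ℚ) ^ (n * (n + 1) / 2) := by
  rw [hasProdFF.tprod_eq, hasSumTri.tsum_eq]
end
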